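/- arXiv:1702.07464 — 2 statements merged into one kernel-verified Lean document; each statement's English description precedes it below -/
import Mathlib

section
/- The GAN virtual training criterion C(G) = E_{x~p_data}[log(p_data(x)/(p_data(x)+p_g(x)))] + E_{x~p_g}[log(p_g(x)/(p_data(x)+p_g(x)))] satisfies C(G) = −log 4 + 2·JSD(p_data ‖ p_g), where JSD is the Jensen–Shannon divergence. -/
open MeasureTheory

lemma gan_aux {X : Type*} [MeasurableSpace X] (μ : Measure X)
    (p q : X → ℝ) (hp : ∀ x, 0 ≤ p x) (hq : ∀ x, 0 ≤ q x)
    (hp1 : ∫ x, p x ∂μ = 1)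
    (hInt1 : Integrable (fun x => p x * Real.log (p x / (p x + q x))) μ) :
    ∫ x, p x * Real.log (p x / ((p x + q x) / 2)) ∂μ =
      (∫ x, p x * Real.log (p x / (p x + q x)) ∂μ) + Real.log 2 := by
  have hintp : Integrable p μ := by
    by_contra h
    rw [integral_undef h] at hp1; norm_num at hp1
  have key : ∀ x, p x * Real.log (p x / ((p x + q x) / 2)) =
      p x * Real.log (p x / (p x + q x)) + Real.log 2 * p x := by
    intro x
    rcases eq_or_lt_of_le (hp x) with h0 | h0
    · simp [← h0]
    · have hs : 0 < p x + q x := by linarith [hq x]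
      have : p x / ((p x + q x) / 2) = 2 * (p x / (p x + q x)) := by
        field_simp
      rw [this, Real.log_mul two_ne_zero (ne_of_gt (div_pos h0 hs))]
      ring
  simp_rw [key]
  rw [integral_add hInt1 (hintp.const_mul (Real.log 2)),
    integral_const_mul, hp1, mul_one]

/-- The GAN virtual training criterion
C(G) = E_{p_data}[log(p_data/(p_data+p_g))] + E_{p_g}[log(p_g/(p_data+p_g))]
satisfies C(G) = −log 4 + 2·JSD(p_data‖p_g), where JSD(p‖q) =
(1/2)KL(p‖m) + (1/2)KL(q‖m) with m = (p+q)/2, KL written with densities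
w.r.t. a common σ-finite measure μ. -/
theorem gan_criterion_eq_jsd {X : Type*} [MeasurableSpace X] (μ : Measure X)
    [SigmaFinite μ] (p q : X → ℝ)
    (hp : ∀ x, 0 ≤ p x) (hq : ∀ x, 0 ≤ q x)
    (hpm : Measurable p) (hqm : Measurable q)
    (hp1 : ∫ x, p x ∂μ = 1) (hq1 : ∫ x, q x ∂μ = 1)
    (hInt1 : Integrable (fun x => p x * Real.log (p x / (p x + q x))) μ)
    (hInt2 : Integrable (fun x => q x * Real.log (q x / (p x + q x))) μ) :
    (∫ x, p x * Real.log (p x / (p x + q x)) ∂μ) +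
      (∫ x, q x * Real.log (q x / (p x + q x)) ∂μ) =
    -Real.log 4 +
      2 * ((1 / 2) * ∫ x, p x * Real.log (p x / ((p x + q x) / 2)) ∂μ +
           (1 / 2) * ∫ x, q x * Real.log (q x / ((p x + q x) / 2)) ∂μ) := by
  have h1 := gan_aux μ p q hp hq hp1 hInt1
  have h2 := gan_aux μ q p hq hp hq1 (by simpa [add_comm] using hInt2)
  simp only [add_comm (q _)] at h2
  rw [h1, h2]
  have : Real.log 4 = 2 * Real.log 2 := by
    rw [show (4:ℝ) = 2 ^ 2 by norm_num, Real.log_pow]; push_cast; ring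
  rw [this]; ring
end

section
/- If the discriminator cannot distinguish generated from real samples in the sense that E_{x~p_data}[log D(x)] + E_{x~p_g}[log(1−D(x))] ≤ −log 4 for the optimal discriminator D = D*, then p_g = p_data. -/
/-!
With `m = (p + q) / 2`, the objective at `D*` plus `log 4` is `2 · JSD(p ‖ q)`, the integral of
`m (φ (p / m) + φ (q / m))` with `φ x = x log x + 1 - x` (`klFun`). Since `φ ≥ 0` with equality only
at `1`, the hypothesis forces this nonnegative integrand to vanish a.e., i.e. `p = q` a.e.
-/

open MeasureTheory Real InformationTheory

/-- The integrand of `2 · JSD(p ‖ q)` at values `a = p x`, `b = q x`, written through the optimal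
discriminator `a / (a + b)`, as in the objective. -/
noncomputable def jsIntegrand (a b : ℝ) : ℝ :=
  a * log (a / (a + b)) + b * log (1 - a / (a + b)) + (a + b) * log 2

lemma jsIntegrand_eq_klFun {a b : ℝ} (hab : 0 < a + b) :
    jsIntegrand a b =
      (a + b) / 2 * (klFun (2 * a / (a + b)) + klFun (2 * b / (a + b))) := by
  have mul_log_two_mul (x : ℝ) :
      x * log (2 * x / (a + b)) = x * log (x / (a + b)) + x * log 2 := by
    rcases eq_or_ne x 0 with rfl | hx
    · simp
    rw [mul_div_assoc, log_mul two_ne_zero (div_ne_zero hx hab.ne')]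
    ring
  have half_mul_klFun (x : ℝ) : (a + b) / 2 * klFun (2 * x / (a + b)) =
      x * log (2 * x / (a + b)) + (a + b) / 2 - x := by
    have hx : (a + b) / 2 * (2 * x / (a + b)) = x := by field_simp
    rw [klFun]
    linear_combination (log (2 * x / (a + b)) - 1) * hx
  have one_sub : 1 - a / (a + b) = b / (a + b) := by field_simp; ring
  rw [jsIntegrand, one_sub, mul_add, half_mul_klFun, half_mul_klFun, mul_log_two_mul,
    mul_log_two_mul]
  ring

lemma jsIntegrand_nonneg {a b : ℝ} (ha : 0 ≤ a) (hb : 0 ≤ b) : 0 ≤ jsIntegrand a b := by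
  rcases (add_nonneg ha hb).eq_or_lt with hab | hab
  · obtain ⟨rfl, rfl⟩ : a = 0 ∧ b = 0 := ⟨by linarith, by linarith⟩
    simp [jsIntegrand]
  rw [jsIntegrand_eq_klFun hab]
  have := klFun_nonneg (by positivity : 0 ≤ 2 * a / (a + b))
  have := klFun_nonneg (by positivity : 0 ≤ 2 * b / (a + b))
  positivity

lemma eq_of_jsIntegrand_eq_zero {a b : ℝ} (ha : 0 ≤ a) (hb : 0 ≤ b)
    (h : jsIntegrand a b = 0) : a = b := by
  rcases (add_nonneg ha hb).eq_or_lt with hab | hab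
  · linarith
  rw [jsIntegrand_eq_klFun hab] at h
  have hka := klFun_nonneg (by positivity : 0 ≤ 2 * a / (a + b))
  have hkb := klFun_nonneg (by positivity : 0 ≤ 2 * b / (a + b))
  have hsum : klFun (2 * a / (a + b)) + klFun (2 * b / (a + b)) = 0 :=
    (mul_eq_zero.1 h).resolve_left (by positivity)
  have hDa := (klFun_eq_zero_iff (by positivity)).1 (by linarith : klFun (2 * a / (a + b)) = 0)
  rw [div_eq_one_iff_eq hab.ne'] at hDa
  linarith

lemma mul_log_div_add_nonpos {a b : ℝ} (ha : 0 ≤ a) (hb : 0 ≤ b) :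
    a * log (a / (a + b)) ≤ 0 :=
  mul_nonpos_of_nonneg_of_nonpos ha <|
    log_nonpos (by positivity) (div_le_one_of_le₀ (by linarith) (by positivity))

lemma mul_log_one_sub_div_add_nonpos {a b : ℝ} (ha : 0 ≤ a) (hb : 0 ≤ b) :
    b * log (1 - a / (a + b)) ≤ 0 := by
  have hD₀ : 0 ≤ a / (a + b) := by positivity
  have hD₁ : a / (a + b) ≤ 1 := div_le_one_of_le₀ (by linarith) (by positivity)
  exact mul_nonpos_of_nonneg_of_nonpos hb (log_nonpos (by linarith) (by linarith))

lemma abs_mul_log_div_add_le {a b : ℝ} (ha : 0 ≤ a) (hb : 0 ≤ b) :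
    |a * log (a / (a + b))| ≤ (a + b) * log 2 := by
  have h := jsIntegrand_nonneg ha hb
  rw [jsIntegrand] at h
  rw [abs_of_nonpos (mul_log_div_add_nonpos ha hb)]
  linarith [mul_log_one_sub_div_add_nonpos ha hb]

lemma abs_mul_log_one_sub_div_add_le {a b : ℝ} (ha : 0 ≤ a) (hb : 0 ≤ b) :
    |b * log (1 - a / (a + b))| ≤ (a + b) * log 2 := by
  have h := jsIntegrand_nonneg ha hb
  rw [jsIntegrand] at h
  rw [abs_of_nonpos (mul_log_one_sub_div_add_nonpos ha hb)]
  linarith [mul_log_div_add_nonpos ha hb]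

section Integral

variable {X : Type*} [MeasurableSpace X] {μ : Measure X} {p q : X → ℝ}

lemma integrable_mul_log_div_add (hp : ∀ x, 0 ≤ p x) (hq : ∀ x, 0 ≤ q x)
    (hpi : Integrable p μ) (hqi : Integrable q μ) :
    Integrable (fun x => p x * log (p x / (p x + q x))) μ :=
  have hpm := hpi.aemeasurable
  have hqm := hqi.aemeasurable
  ((hpi.add hqi).mul_const (log 2)).mono' (by fun_prop)
    (ae_of_all _ fun x => abs_mul_log_div_add_le (hp x) (hq x))

lemma integrable_mul_log_one_sub_div_add (hp : ∀ x, 0 ≤ p x) (hq : ∀ x, 0 ≤ q x)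
    (hpi : Integrable p μ) (hqi : Integrable q μ) :
    Integrable (fun x => q x * log (1 - p x / (p x + q x))) μ :=
  have hpm := hpi.aemeasurable
  have hqm := hqi.aemeasurable
  ((hpi.add hqi).mul_const (log 2)).mono' (by fun_prop)
    (ae_of_all _ fun x => abs_mul_log_one_sub_div_add_le (hp x) (hq x))

lemma integrable_jsIntegrand (hp : ∀ x, 0 ≤ p x) (hq : ∀ x, 0 ≤ q x)
    (hpi : Integrable p μ) (hqi : Integrable q μ) :
    Integrable (fun x => jsIntegrand (p x) (q x)) μ :=
  ((integrable_mul_log_div_add hp hq hpi hqi).add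
    (integrable_mul_log_one_sub_div_add hp hq hpi hqi)).add ((hpi.add hqi).mul_const (log 2))

lemma integral_jsIntegrand (hp : ∀ x, 0 ≤ p x) (hq : ∀ x, 0 ≤ q x)
    (hpi : Integrable p μ) (hqi : Integrable q μ) :
    ∫ x, jsIntegrand (p x) (q x) ∂μ =
      (∫ x, p x * log (p x / (p x + q x)) ∂μ) + (∫ x, q x * log (1 - p x / (p x + q x)) ∂μ)
        + ((∫ x, p x ∂μ) + ∫ x, q x ∂μ) * log 2 := by
  have hAB : Integrable (fun x => p x * log (p x / (p x + q x)) +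
      q x * log (1 - p x / (p x + q x))) μ :=
    (integrable_mul_log_div_add hp hq hpi hqi).add
      (integrable_mul_log_one_sub_div_add hp hq hpi hqi)
  have hC : Integrable (fun x => (p x + q x) * log 2) μ := (hpi.add hqi).mul_const _
  simp only [jsIntegrand]
  rw [integral_add hAB hC,
    integral_add (integrable_mul_log_div_add hp hq hpi hqi)
      (integrable_mul_log_one_sub_div_add hp hq hpi hqi),
    integral_mul_const, integral_add hpi hqi]

end Integral

theorem indistinguishable_implies_equal_general {X : Type*} [MeasurableSpace X]
    (μ : Measure X) (p q : X → ℝ)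
    (hp : ∀ x, 0 ≤ p x) (hq : ∀ x, 0 ≤ q x)
    (hp1 : ∫ x, p x ∂μ = 1) (hq1 : ∫ x, q x ∂μ = 1)
    (hobj : (∫ x, p x * Real.log (p x / (p x + q x)) ∂μ) +
        (∫ x, q x * Real.log (1 - p x / (p x + q x)) ∂μ) ≤ -Real.log 4) :
    μ.withDensity (fun x => ENNReal.ofReal (q x)) =
      μ.withDensity (fun x => ENNReal.ofReal (p x)) := by
  have hpi : Integrable p μ := .of_integral_ne_zero (by simp [hp1])
  have hqi : Integrable q μ := .of_integral_ne_zero (by simp [hq1])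
  have hJ_nonneg x : 0 ≤ jsIntegrand (p x) (q x) := jsIntegrand_nonneg (hp x) (hq x)
  have hlog4 : log 4 = 2 * log 2 := by
    rw [show (4 : ℝ) = 2 ^ 2 by norm_num, log_pow, Nat.cast_ofNat]
  have hJ_zero : ∫ x, jsIntegrand (p x) (q x) ∂μ = 0 :=
    le_antisymm (by rw [integral_jsIntegrand hp hq hpi hqi, hp1, hq1]; linarith)
      (integral_nonneg hJ_nonneg)
  have hJ_ae : ∀ᵐ x ∂μ, jsIntegrand (p x) (q x) = 0 :=
    (integral_eq_zero_iff_of_nonneg hJ_nonneg (integrable_jsIntegrand hp hq hpi hqi)).1 hJ_zero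
  refine withDensity_congr_ae (hJ_ae.mono fun x hx => ?_)
  dsimp only
  rw [eq_of_jsIntegrand_eq_zero (hp x) (hq x) hx]

/-- If the optimal-discriminator objective satisfies
E_{p_data}[log D*] + E_{p_g}[log(1−D*)] ≤ −log 4, where
D*(x) = p_data(x)/(p_data(x)+p_g(x)), then p_g = p_data. -/
theorem indistinguishable_implies_equal {X : Type*} [MeasurableSpace X]
    (μ : Measure X) [SigmaFinite μ] (p q : X → ℝ)
    (hp : ∀ x, 0 ≤ p x) (hq : ∀ x, 0 ≤ q x)
    (hpm : Measurable p) (hqm : Measurable q)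
    (hp1 : ∫ x, p x ∂μ = 1) (hq1 : ∫ x, q x ∂μ = 1)
    (hobj : (∫ x, p x * Real.log (p x / (p x + q x)) ∂μ) +
        (∫ x, q x * Real.log (1 - p x / (p x + q x)) ∂μ) ≤ -Real.log 4) :
    μ.withDensity (fun x => ENNReal.ofReal (q x)) =
      μ.withDensity (fun x => ENNReal.ofReal (p x)) :=
  indistinguishable_implies_equal_general μ p q hp hq hp1 hq1 hobj
end
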